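/- arXiv:1606.06886 — 2 statements merged into one kernel-verified Lean document; each statement's English description precedes it below -/
import Mathlib

section
/- Let X₊, X₋ : [0,∞) × [0,∞) → ℝ be C¹ and let a : [0,∞) × [0,∞) → ℝ be continuous with a(r,t) ≥ 0 everywhere. Suppose (∂ₜ − ∂ᵣ)X₊ + a(X₊ + X₋) = 0 and (∂ₜ + ∂ᵣ)X₋ + a(X₊ + X₋) = 0 pointwise, that X₊(0,t) + X₋(0,t) = 0 for all t ≥ 0, and that for every T > 0 there is R > 0 with X₊(r,t) = X₋(r,t) = 0 whenever r ≥ R and 0 ≤ t ≤ T. Then for every natural number k ≥ 1 and all 0 ≤ t₁ ≤ t₂, ∫₀^∞ (X₊(r,t₂)^{2k} + X₋(r,t₂)^{2k}) dr ≤ ∫₀^∞ (X₊(r,t₁)^{2k} + X₋(r,t₁)^{2k}) dr. -/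
/-! Multiplying the two equations by `n X₊^(n-1)` and `n X₋^(n-1)` (with `n = 2k`) gives the
balance law `∂ₜ(X₊^n + X₋^n) = ∂ᵣ(X₊^n - X₋^n) - n a (X₊ + X₋)(X₊^(n-1) + X₋^(n-1))`. Its damping
term is nonnegative because `x ↦ x^(n-1)` is odd and increasing, and the flux `X₊^n - X₋^n`
vanishes at `r = 0` (there `X₋ = -X₊` and `n` is even) and beyond the support. So the spatial
integral of `∂ₜ(X₊^n + X₋^n)` over `[0, R]` is nonpositive, and integrating in time (Fubini) shows
that the energy on `[0, R]`, which is the whole `L^n` integral, does not increase. -/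

open MeasureTheory Set Real
open scoped ENNReal

noncomputable section

/-- Partial derivative in the first (space) variable of a function on ℝ × ℝ. -/
def d1 (g : ℝ × ℝ → ℝ) : ℝ × ℝ → ℝ := fun z => fderiv ℝ g z ((1 : ℝ), (0 : ℝ))

/-- Partial derivative in the second (time) variable of a function on ℝ × ℝ. -/
def d2 (g : ℝ × ℝ → ℝ) : ℝ × ℝ → ℝ := fun z => fderiv ℝ g z ((0 : ℝ), (1 : ℝ))

open intervalIntegral

lemma hasDerivAt_d1 {g : ℝ × ℝ → ℝ} (hg : Differentiable ℝ g) (r t : ℝ) :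
    HasDerivAt (fun s => g (s, t)) (d1 g (r, t)) r :=
  (hg (r, t)).hasFDerivAt.comp_hasDerivAt r ((hasDerivAt_id r).prodMk (hasDerivAt_const r t))

lemma hasDerivAt_d2 {g : ℝ × ℝ → ℝ} (hg : Differentiable ℝ g) (r t : ℝ) :
    HasDerivAt (fun s => g (r, s)) (d2 g (r, t)) t :=
  (hg (r, t)).hasFDerivAt.comp_hasDerivAt t ((hasDerivAt_const t r).prodMk (hasDerivAt_id t))

@[fun_prop]
lemma continuous_d1 {g : ℝ × ℝ → ℝ} (hg : ContDiff ℝ 1 g) : Continuous (d1 g) :=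
  (hg.continuous_fderiv one_ne_zero).clm_apply continuous_const

@[fun_prop]
lemma continuous_d2 {g : ℝ × ℝ → ℝ} (hg : ContDiff ℝ 1 g) : Continuous (d2 g) :=
  (hg.continuous_fderiv one_ne_zero).clm_apply continuous_const

theorem Odd.add_mul_pow_add_pow_nonneg {R : Type*} [Ring R] [LinearOrder R]
    [IsStrictOrderedRing R] {m : ℕ} (hm : Odd m) (x y : R) : 0 ≤ (x + y) * (x ^ m + y ^ m) := by
  have hmono : Monotone fun u : R => u ^ m := hm.strictMono_pow.monotone
  rw [← sub_neg_eq_add x y, ← sub_neg_eq_add (x ^ m), ← hm.neg_pow]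
  rcases le_total (-y) x with h | h
  · exact mul_nonneg (sub_nonneg.2 h) (sub_nonneg.2 (hmono h))
  · exact mul_nonneg_of_nonpos_of_nonpos (sub_nonpos.2 h) (sub_nonpos.2 (hmono h))

theorem integral_sub_integral_eq_integral_integral_of_hasDerivAt
    {E : Type*} [NormedAddCommGroup E] [NormedSpace ℝ E] [CompleteSpace E]
    {G ψ : ℝ × ℝ → E} (hG : Continuous G) (hψ : Continuous ψ)
    (hderiv : ∀ r t, HasDerivAt (fun s => G (r, s)) (ψ (r, t)) t) (a b t₁ t₂ : ℝ) :
    (∫ r in a..b, G (r, t₂)) - ∫ r in a..b, G (r, t₁) = ∫ t in t₁..t₂, ∫ r in a..b, ψ (r, t) := by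
  have hslice : ∀ t, Continuous fun r => G (r, t) := fun t => by fun_prop
  calc (∫ r in a..b, G (r, t₂)) - ∫ r in a..b, G (r, t₁)
      = ∫ r in a..b, (G (r, t₂) - G (r, t₁)) :=
        (integral_sub ((hslice t₂).intervalIntegrable a b)
          ((hslice t₁).intervalIntegrable a b)).symm
    _ = ∫ r in a..b, ∫ t in t₁..t₂, ψ (r, t) := integral_congr fun r _ =>
        (integral_eq_sub_of_hasDerivAt (fun t _ => hderiv r t)
          ((hψ.comp (continuous_const.prodMk continuous_id)).intervalIntegrable t₁ t₂)).symm
    _ = ∫ t in t₁..t₂, ∫ r in a..b, ψ (r, t) := by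
      simp only [intervalIntegral_eq_integral_uIoc, MeasureTheory.integral_smul, smul_smul,
        mul_comm (if a ≤ b then (1 : ℝ) else -1)]
      refine congrArg _ (integral_integral_swap ?_)
      rw [Measure.prod_restrict]
      exact (hψ.continuousOn.integrableOn_compact (isCompact_uIcc.prod isCompact_uIcc)).mono_set
        (prod_mono uIoc_subset_uIcc uIoc_subset_uIcc)

lemma lintegral_Ioi_ofReal_eq_ofReal_integral {f : ℝ → ℝ} {a R : ℝ} (haR : a ≤ R)
    (hf : IntegrableOn f (Ioc a R)) (hnn : ∀ r ∈ Ioc a R, 0 ≤ f r)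
    (hvanish : ∀ r, R < r → f r = 0) :
    ∫⁻ r in Ioi a, ENNReal.ofReal (f r) = ENNReal.ofReal (∫ r in a..R, f r) := by
  rw [← Ioc_union_Ioi_eq_Ioi haR, lintegral_union measurableSet_Ioi Ioc_disjoint_Ioi_same,
    setLIntegral_congr_fun (g := fun _ => 0) measurableSet_Ioi
      (fun r hr => by rw [hvanish r hr, ENNReal.ofReal_zero]),
    lintegral_zero, add_zero, integral_of_le haR,
    ofReal_integral_eq_lintegral_ofReal hf
      ((ae_restrict_iff' measurableSet_Ioc).2 (.of_forall hnn))]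

section DampedTransport

variable {Xp Xm a : ℝ × ℝ → ℝ} {n : ℕ}

lemma timeDeriv_energyDensity_le_spaceDeriv_flux (hn : Odd (n - 1)) {z : ℝ × ℝ}
    (haz : 0 ≤ a z)
    (heqp : d2 Xp z - d1 Xp z + a z * (Xp z + Xm z) = 0)
    (heqm : d2 Xm z + d1 Xm z + a z * (Xp z + Xm z) = 0) :
    n * Xp z ^ (n - 1) * d2 Xp z + n * Xm z ^ (n - 1) * d2 Xm z ≤
      n * Xp z ^ (n - 1) * d1 Xp z - n * Xm z ^ (n - 1) * d1 Xm z := by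
  have hdamp : 0 ≤ n * a z * ((Xp z + Xm z) * (Xp z ^ (n - 1) + Xm z ^ (n - 1))) :=
    mul_nonneg (mul_nonneg n.cast_nonneg haz) (hn.add_mul_pow_add_pow_nonneg _ _)
  linear_combination (n * Xp z ^ (n - 1)) * heqp + (n * Xm z ^ (n - 1)) * heqm + hdamp

lemma integral_timeDeriv_energyDensity_nonpos (hXp : ContDiff ℝ 1 Xp) (hXm : ContDiff ℝ 1 Xm)
    (hn : Even n) (hn0 : n ≠ 0) {R t : ℝ} (hR : 0 ≤ R) (ht : 0 ≤ t)
    (hann : ∀ z : ℝ × ℝ, 0 ≤ z.1 → 0 ≤ z.2 → 0 ≤ a z)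
    (heqp : ∀ z : ℝ × ℝ, 0 ≤ z.1 → 0 ≤ z.2 →
      d2 Xp z - d1 Xp z + a z * (Xp z + Xm z) = 0)
    (heqm : ∀ z : ℝ × ℝ, 0 ≤ z.1 → 0 ≤ z.2 →
      d2 Xm z + d1 Xm z + a z * (Xp z + Xm z) = 0)
    (hbd : Xp (0, t) + Xm (0, t) = 0) (hXpR : Xp (R, t) = 0) (hXmR : Xm (R, t) = 0) :
    ∫ r in (0 : ℝ)..R,
      (n * Xp (r, t) ^ (n - 1) * d2 Xp (r, t) + n * Xm (r, t) ^ (n - 1) * d2 Xm (r, t)) ≤ 0 := by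
  have hodd : Odd (n - 1) := Nat.Even.sub_odd (Nat.one_le_iff_ne_zero.2 hn0) hn odd_one
  have hflux : ∀ r, HasDerivAt (fun s => Xp (s, t) ^ n - Xm (s, t) ^ n)
      (n * Xp (r, t) ^ (n - 1) * d1 Xp (r, t) - n * Xm (r, t) ^ (n - 1) * d1 Xm (r, t)) r :=
    fun r => ((hasDerivAt_d1 (hXp.differentiable one_ne_zero) r t).pow n).sub
      ((hasDerivAt_d1 (hXm.differentiable one_ne_zero) r t).pow n)
  calc _ ≤ ∫ r in (0 : ℝ)..R,
        (n * Xp (r, t) ^ (n - 1) * d1 Xp (r, t) - n * Xm (r, t) ^ (n - 1) * d1 Xm (r, t)) :=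
        integral_mono_on hR (by apply Continuous.intervalIntegrable; fun_prop)
          (by apply Continuous.intervalIntegrable; fun_prop) fun r hr =>
          timeDeriv_energyDensity_le_spaceDeriv_flux hodd (hann _ hr.1 ht) (heqp _ hr.1 ht)
            (heqm _ hr.1 ht)
    _ = (Xp (R, t) ^ n - Xm (R, t) ^ n) - (Xp (0, t) ^ n - Xm (0, t) ^ n) :=
        integral_eq_sub_of_hasDerivAt (fun r _ => hflux r)
          (by apply Continuous.intervalIntegrable; fun_prop)
    _ = 0 := by
        rw [hXpR, hXmR, eq_neg_of_add_eq_zero_right hbd, hn.neg_pow, zero_pow hn0]; ring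

theorem integral_energyDensity_le_of_le (hXp : ContDiff ℝ 1 Xp) (hXm : ContDiff ℝ 1 Xm)
    (hn : Even n) (hn0 : n ≠ 0) {R t₁ t₂ : ℝ} (hR : 0 ≤ R) (ht₁ : 0 ≤ t₁) (ht₁₂ : t₁ ≤ t₂)
    (hann : ∀ z : ℝ × ℝ, 0 ≤ z.1 → 0 ≤ z.2 → 0 ≤ a z)
    (heqp : ∀ z : ℝ × ℝ, 0 ≤ z.1 → 0 ≤ z.2 →
      d2 Xp z - d1 Xp z + a z * (Xp z + Xm z) = 0)
    (heqm : ∀ z : ℝ × ℝ, 0 ≤ z.1 → 0 ≤ z.2 →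
      d2 Xm z + d1 Xm z + a z * (Xp z + Xm z) = 0)
    (hbd : ∀ t : ℝ, 0 ≤ t → Xp (0, t) + Xm (0, t) = 0)
    (hvanish : ∀ t ∈ Icc t₁ t₂, Xp (R, t) = 0 ∧ Xm (R, t) = 0) :
    ∫ r in (0 : ℝ)..R, (Xp (r, t₂) ^ n + Xm (r, t₂) ^ n)
      ≤ ∫ r in (0 : ℝ)..R, (Xp (r, t₁) ^ n + Xm (r, t₁) ^ n) := by
  have hdiff := integral_sub_integral_eq_integral_integral_of_hasDerivAt
    (G := fun z => Xp z ^ n + Xm z ^ n)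
    (ψ := fun z => n * Xp z ^ (n - 1) * d2 Xp z + n * Xm z ^ (n - 1) * d2 Xm z)
    (by fun_prop) (by fun_prop)
    (fun r t => ((hasDerivAt_d2 (hXp.differentiable one_ne_zero) r t).pow n).add
      ((hasDerivAt_d2 (hXm.differentiable one_ne_zero) r t).pow n)) 0 R t₁ t₂
  have hrate : ∫ t in t₁..t₂, ∫ r in (0 : ℝ)..R,
      (n * Xp (r, t) ^ (n - 1) * d2 Xp (r, t) + n * Xm (r, t) ^ (n - 1) * d2 Xm (r, t)) ≤ 0 := by
    rw [integral_of_le ht₁₂]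
    refine setIntegral_nonpos measurableSet_Ioc fun t ht => ?_
    have ht0 : 0 ≤ t := ht₁.trans ht.1.le
    obtain ⟨hXpR, hXmR⟩ := hvanish t (Ioc_subset_Icc_self ht)
    exact integral_timeDeriv_energyDensity_nonpos hXp hXm hn hn0 hR ht0 hann heqp heqm
      (hbd t ht0) hXpR hXmR
  linarith

end DampedTransport

theorem L2k_monotonicity_half_line_general
    (Xp Xm a : ℝ × ℝ → ℝ)
    (hXp : ContDiff ℝ 1 Xp) (hXm : ContDiff ℝ 1 Xm)
    (hann : ∀ z : ℝ × ℝ, 0 ≤ z.1 → 0 ≤ z.2 → 0 ≤ a z)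
    (heqp : ∀ z : ℝ × ℝ, 0 ≤ z.1 → 0 ≤ z.2 →
      d2 Xp z - d1 Xp z + a z * (Xp z + Xm z) = 0)
    (heqm : ∀ z : ℝ × ℝ, 0 ≤ z.1 → 0 ≤ z.2 →
      d2 Xm z + d1 Xm z + a z * (Xp z + Xm z) = 0)
    (hbd : ∀ t : ℝ, 0 ≤ t → Xp (0, t) + Xm (0, t) = 0)
    (hsupp : ∀ T : ℝ, 0 < T → ∃ R > (0 : ℝ), ∀ r t : ℝ,
      R ≤ r → 0 ≤ t → t ≤ T → Xp (r, t) = 0 ∧ Xm (r, t) = 0) :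
    ∀ k : ℕ, 1 ≤ k → ∀ t₁ t₂ : ℝ, 0 ≤ t₁ → t₁ ≤ t₂ →
      (∫⁻ r in Ioi (0 : ℝ), ENNReal.ofReal (Xp (r, t₂) ^ (2 * k) + Xm (r, t₂) ^ (2 * k)))
        ≤ ∫⁻ r in Ioi (0 : ℝ), ENNReal.ofReal (Xp (r, t₁) ^ (2 * k) + Xm (r, t₁) ^ (2 * k)) := by
  intro k hk t₁ t₂ ht₁ ht₁₂
  obtain ⟨R, hR, hvanish⟩ := hsupp (t₂ + 1) (by linarith)
  have hn : Even (2 * k) := even_two_mul k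
  have hn0 : 2 * k ≠ 0 := by omega
  have hL2k : ∀ t, 0 ≤ t → t ≤ t₂ →
      ∫⁻ r in Ioi (0 : ℝ), ENNReal.ofReal (Xp (r, t) ^ (2 * k) + Xm (r, t) ^ (2 * k)) =
        ENNReal.ofReal (∫ r in (0 : ℝ)..R, (Xp (r, t) ^ (2 * k) + Xm (r, t) ^ (2 * k))) :=
    fun t ht0 ht => lintegral_Ioi_ofReal_eq_ofReal_integral hR.le
      (by apply Continuous.integrableOn_Ioc; fun_prop)
      (fun r _ => add_nonneg (hn.pow_nonneg _) (hn.pow_nonneg _))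
      (fun r hr => by
        obtain ⟨hp, hm⟩ := hvanish r t hr.le ht0 (by linarith)
        rw [hp, hm, zero_pow hn0, add_zero])
  rw [hL2k t₂ (ht₁.trans ht₁₂) le_rfl, hL2k t₁ ht₁ ht₁₂]
  exact ENNReal.ofReal_le_ofReal <|
    integral_energyDensity_le_of_le hXp hXm hn hn0 hR.le ht₁ ht₁₂ hann heqp heqm hbd
      fun t ht => hvanish R t le_rfl (ht₁.trans ht.1) (by linarith [ht.2])

/-- monotonicity of the `L^{2k}` integrals on the half line for the
damped transport system with reflecting boundary condition at `r = 0`. -/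
theorem L2k_monotonicity_half_line
    (Xp Xm a : ℝ × ℝ → ℝ)
    (hXp : ContDiff ℝ 1 Xp) (hXm : ContDiff ℝ 1 Xm) (ha : Continuous a)
    (hann : ∀ z : ℝ × ℝ, 0 ≤ z.1 → 0 ≤ z.2 → 0 ≤ a z)
    (heqp : ∀ z : ℝ × ℝ, 0 ≤ z.1 → 0 ≤ z.2 →
      d2 Xp z - d1 Xp z + a z * (Xp z + Xm z) = 0)
    (heqm : ∀ z : ℝ × ℝ, 0 ≤ z.1 → 0 ≤ z.2 →
      d2 Xm z + d1 Xm z + a z * (Xp z + Xm z) = 0)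
    (hbd : ∀ t : ℝ, 0 ≤ t → Xp (0, t) + Xm (0, t) = 0)
    (hsupp : ∀ T : ℝ, 0 < T → ∃ R > (0 : ℝ), ∀ r t : ℝ,
      R ≤ r → 0 ≤ t → t ≤ T → Xp (r, t) = 0 ∧ Xm (r, t) = 0) :
    ∀ k : ℕ, 1 ≤ k → ∀ t₁ t₂ : ℝ, 0 ≤ t₁ → t₁ ≤ t₂ →
      (∫⁻ r in Ioi (0 : ℝ), ENNReal.ofReal (Xp (r, t₂) ^ (2 * k) + Xm (r, t₂) ^ (2 * k)))
        ≤ ∫⁻ r in Ioi (0 : ℝ), ENNReal.ofReal (Xp (r, t₁) ^ (2 * k) + Xm (r, t₁) ^ (2 * k)) :=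
  L2k_monotonicity_half_line_general Xp Xm a hXp hXm hann heqp heqm hbd hsupp
end
end

section
/- Let p ≥ 3 be a real number and let u : ℝ × [0,∞) → ℝ be a C³ solution of the one-dimensional dissipative wave equation ∂ₜ²u − ∂ₓ²u + |∂ₜu|^{p−1}∂ₜu = 0 such that for every T > 0 there is R > 0 with u(x,t) = 0 whenever |x| ≥ R and 0 ≤ t ≤ T. Define Y₊ = (∂ₜ + ∂ₓ)∂ₜu and Y₋ = (∂ₜ − ∂ₓ)∂ₜu. Then the quantity max( sup_{x∈ℝ}|Y₊(x,t)|, sup_{x∈ℝ}|Y₋(x,t)| ) is nonincreasing in t on [0,∞). -/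
/-!
Write `v = ∂ₜu` and `Y_σ = (∂ₜ + σ∂ₓ)v` for `σ = ±1`. Differentiating the equation in time gives
`v_tt - v_xx = -p|v|^(p-1) v_t`, and since `(∂ₜ - σ∂ₓ)(∂ₜ + σ∂ₓ) = ∂ₜ² - ∂ₓ²` this says that along
the characteristic `x + σt = const` the invariant `Y_σ` obeys
`Y_σ' = -(p/2)|v|^(p-1)(Y_σ + Y_{-σ})`.

Fix `0 ≤ a ≤ b`. Since `u` vanishes for large `|x|`, `max(|Y₊|, |Y₋|)` attains its maximum `A`
over the strip `a ≤ t ≤ b`, say with `Y_σ = A` (the case `-A` is symmetric) at time `t₀`. Along the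
backward characteristic, `f = A - Y_σ ≥ 0` satisfies `f' ≥ -K f` because `Y_{-σ} ≥ -A`, so
`e^{Kt} f` is nondecreasing; as `f(t₀) = 0`, also `f(a) = 0`. Hence the suprema at time `a` are
at least `A`, while those at time `b` are at most `A`.
-/

open MeasureTheory Set Real
open scoped ENNReal

noncomputable section

lemma hasDerivAt_abs_rpow_mul_self {p : ℝ} (hp : 2 < p) (s : ℝ) :
    HasDerivAt (fun s : ℝ => |s| ^ (p - 1) * s) (p * |s| ^ (p - 1)) s := by
  have hpow : (|s| ^ (p - 1 - 2)) * s * s = |s| ^ (p - 1) := by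
    rw [mul_assoc, ← sq, ← sq_abs, ← rpow_natCast,
      ← rpow_add' (abs_nonneg s) (by norm_num; linarith)]
    norm_num
  refine ((hasDerivAt_abs_rpow s (p := p - 1) (by linarith)).fun_mul
    (hasDerivAt_id' s)).congr_deriv ?_
  linear_combination (p - 1) * hpow

lemma ContDiff.d1 {m n : WithTop ℕ∞} {g : ℝ × ℝ → ℝ} (hg : ContDiff ℝ n g)
    (h : m + 1 ≤ n) : ContDiff ℝ m (d1 g) :=
  (hg.fderiv_right h).clm_apply contDiff_const

lemma ContDiff.d2 {m n : WithTop ℕ∞} {g : ℝ × ℝ → ℝ} (hg : ContDiff ℝ n g)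
    (h : m + 1 ≤ n) : ContDiff ℝ m (d2 g) :=
  (hg.fderiv_right h).clm_apply contDiff_const

lemma fderiv_fderiv_apply {E F : Type*} [NormedAddCommGroup E] [NormedSpace ℝ E]
    [NormedAddCommGroup F] [NormedSpace ℝ F] {g : E → F} {z : E}
    (hg : DifferentiableAt ℝ (fderiv ℝ g) z) (v w : E) :
    fderiv ℝ (fun y => fderiv ℝ g y w) z v = fderiv ℝ (fderiv ℝ g) z v w := by
  simp [fderiv_clm_apply hg (differentiableAt_const w)]

lemma ContDiff.differentiable_fderiv {E F : Type*} [NormedAddCommGroup E] [NormedSpace ℝ E]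
    [NormedAddCommGroup F] [NormedSpace ℝ F] {g : E → F} (hg : ContDiff ℝ 2 g) :
    Differentiable ℝ (fderiv ℝ g) :=
  (hg.fderiv_right (m := 1) (by norm_num)).differentiable one_ne_zero

lemma d1_d2_comm {g : ℝ × ℝ → ℝ} (hg : ContDiff ℝ 2 g) : d1 (d2 g) = d2 (d1 g) := by
  funext z
  have hD := hg.differentiable_fderiv z
  unfold d1 d2
  rw [fderiv_fderiv_apply hD, fderiv_fderiv_apply hD]
  exact hg.contDiffAt.isSymmSndFDerivAt (by simp) _ _

/-- `(∂ₜ + σ∂ₓ) g`, so that `Y± = charDeriv (±1) (d2 u)`. -/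
def charDeriv (σ : ℝ) (g : ℝ × ℝ → ℝ) : ℝ × ℝ → ℝ := fun z => d2 g z + σ * d1 g z

lemma charDeriv_eq_fderiv (σ : ℝ) (g : ℝ × ℝ → ℝ) :
    charDeriv σ g = fun z => fderiv ℝ g z (σ, 1) := by
  funext z
  have : ((σ, 1) : ℝ × ℝ) = ((0 : ℝ), (1 : ℝ)) + σ • ((1 : ℝ), (0 : ℝ)) := by simp
  rw [this, map_add, map_smul, smul_eq_mul]
  rfl

lemma charDeriv_neg_charDeriv {σ : ℝ} (hσ : σ * σ = 1) {g : ℝ × ℝ → ℝ} (hg : ContDiff ℝ 2 g)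
    (z : ℝ × ℝ) : charDeriv (-σ) (charDeriv σ g) z = d2 (d2 g) z - d1 (d1 g) z := by
  have hD := hg.differentiable_fderiv z
  have hsymm := (hg.contDiffAt (x := z)).isSymmSndFDerivAt (by simp)
    ((1 : ℝ), (0 : ℝ)) ((0 : ℝ), (1 : ℝ))
  rw [charDeriv_eq_fderiv, charDeriv_eq_fderiv]
  unfold d1 d2
  dsimp only
  rw [fderiv_fderiv_apply hD, fderiv_fderiv_apply hD, fderiv_fderiv_apply hD]
  have e : ∀ c : ℝ, ((c, 1) : ℝ × ℝ) = ((0 : ℝ), (1 : ℝ)) + c • ((1 : ℝ), (0 : ℝ)) := by simp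
  rw [e (-σ), e σ]
  simp only [map_add, map_smul, add_apply, smul_apply, smul_eq_mul, hsymm]
  linear_combination (-(fderiv ℝ (fderiv ℝ g) z (1, 0) (1, 0))) * hσ

lemma ContDiff.charDeriv {m n : WithTop ℕ∞} {g : ℝ × ℝ → ℝ} (hg : ContDiff ℝ n g)
    (h : m + 1 ≤ n) (σ : ℝ) : ContDiff ℝ m (charDeriv σ g) :=
  (hg.d2 h).add (contDiff_const.mul (hg.d1 h))

lemma charDeriv_add_charDeriv_neg (σ : ℝ) (g : ℝ × ℝ → ℝ) (z : ℝ × ℝ) :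
    charDeriv σ g z + charDeriv (-σ) g z = 2 * d2 g z := by
  simp only [charDeriv]
  ring

lemma hasDerivAt_comp_characteristic {g : ℝ × ℝ → ℝ} (hg : Differentiable ℝ g) (σ c τ : ℝ) :
    HasDerivAt (fun τ => g (c - σ * τ, τ)) (charDeriv (-σ) g (c - σ * τ, τ)) τ := by
  have hγ : HasDerivAt (fun τ : ℝ => (c - σ * τ, τ)) (-σ, 1) τ := by
    simpa using (((hasDerivAt_id' τ).const_mul σ).const_sub c).prodMk (hasDerivAt_id' τ)
  rw [charDeriv_eq_fderiv]
  exact (hg _).hasFDerivAt.comp_hasDerivAt τ hγ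

lemma d2_d2_d2_sub_d1_d1_d2 {p : ℝ} (hp : 2 < p) {u : ℝ × ℝ → ℝ} (hu : ContDiff ℝ 3 u)
    (heq : ∀ x t : ℝ, 0 < t →
      d2 (d2 u) (x, t) - d1 (d1 u) (x, t) + |d2 u (x, t)| ^ (p - 1) * d2 u (x, t) = 0)
    {z : ℝ × ℝ} (hz : 0 < z.2) :
    d2 (d2 (d2 u)) z - d1 (d1 (d2 u)) z = -(p * |d2 u z| ^ (p - 1) * d2 (d2 u) z) := by
  have hcomm : d1 (d1 (d2 u)) = d2 (d1 (d1 u)) := by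
    rw [d1_d2_comm (hu.of_le (by norm_num)), d1_d2_comm (hu.d1 (by norm_num))]
  have hev : (fun y => d2 (d2 u) y - d1 (d1 u) y) =ᶠ[nhds z]
      fun y => -(|d2 u y| ^ (p - 1) * d2 u y) := by
    filter_upwards [(isOpen_lt continuous_const continuous_snd).mem_nhds hz] with y hy
    linarith [heq y.1 y.2 hy]
  have hv : ContDiff ℝ 2 (d2 u) := hu.d2 (by norm_num)
  have h22 : Differentiable ℝ (d2 (d2 u)) :=
    (hv.d2 (m := 1) (by norm_num)).differentiable one_ne_zero
  have h11 : Differentiable ℝ (d1 (d1 u)) :=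
    ((hu.d1 (m := 2) (by norm_num)).d1 (m := 1) (by norm_num)).differentiable one_ne_zero
  have hwave : HasFDerivAt (fun y => d2 (d2 u) y - d1 (d1 u) y)
      (fderiv ℝ (d2 (d2 u)) z - fderiv ℝ (d1 (d1 u)) z) z :=
    (h22 z).hasFDerivAt.sub (h11 z).hasFDerivAt
  have hnl : HasFDerivAt (fun y => d2 (d2 u) y - d1 (d1 u) y)
      (-((p * |d2 u z| ^ (p - 1)) • fderiv ℝ (d2 u) z)) z :=
    ((hasDerivAt_abs_rpow_mul_self hp (d2 u z)).comp_hasFDerivAt z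
      (hv.differentiable two_ne_zero z).hasFDerivAt).neg.congr_of_eventuallyEq hev
  have := congrArg (· ((0 : ℝ), (1 : ℝ))) (hwave.unique hnl)
  simp only [sub_apply, neg_apply, smul_apply, smul_eq_mul] at this
  rwa [hcomm]

lemma monotoneOn_exp_mul_of_neg_mul_le_deriv {f f' : ℝ → ℝ} {a b K : ℝ}
    (hf : ContinuousOn f (Icc a b)) (hf' : ∀ τ ∈ Ioo a b, HasDerivAt f (f' τ) τ)
    (hK : ∀ τ ∈ Ioo a b, -(K * f τ) ≤ f' τ) :
    MonotoneOn (fun τ => exp (K * τ) * f τ) (Icc a b) := by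
  have hexp (τ : ℝ) : HasDerivAt (fun τ => exp (K * τ)) (exp (K * τ) * K) τ := by
    simpa using ((hasDerivAt_id' τ).const_mul K).exp
  refine monotoneOn_of_hasDerivWithinAt_nonneg (convex_Icc a b)
    (f' := fun τ => exp (K * τ) * K * f τ + exp (K * τ) * f' τ)
    ((continuous_exp.comp (continuous_const_mul K)).continuousOn.mul hf) (fun τ hτ => ?_)
    (fun τ hτ => ?_)
  · rw [interior_Icc] at hτ
    exact ((hexp τ).mul (hf' τ hτ)).hasDerivWithinAt
  · rw [interior_Icc] at hτ
    have := mul_nonneg (exp_pos (K * τ)).le (neg_le_iff_add_nonneg'.1 (hK τ hτ))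
    linarith

lemma eq_of_hasDerivAt_neg_mul_add {g h k : ℝ → ℝ} {a b A K : ℝ} (hab : a ≤ b)
    (hg : ContinuousOn g (Icc a b))
    (hg' : ∀ τ ∈ Ioo a b, HasDerivAt g (-(k τ * (g τ + h τ))) τ)
    (hk : ∀ τ ∈ Ioo a b, 0 ≤ k τ ∧ k τ ≤ K)
    (hgA : ∀ τ ∈ Icc a b, g τ ≤ A) (hhA : ∀ τ ∈ Ioo a b, -A ≤ h τ) (hb : g b = A) :
    g a = A := by
  have hmono := monotoneOn_exp_mul_of_neg_mul_le_deriv (f := fun τ => A - g τ) (K := K)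
    (continuousOn_const.sub hg) (fun τ hτ => (hg' τ hτ).const_sub A) fun τ hτ => by
      -- `k (g + h) + K (A - g) = (K - k) (A - g) + k (A + h)`
      have hgA' := hgA τ (Ioo_subset_Icc_self hτ)
      nlinarith [hk τ hτ, hhA τ hτ]
  have := hmono (left_mem_Icc.2 hab) (right_mem_Icc.2 hab) hab
  simp only [hb, sub_self, mul_zero] at this
  have := nonpos_of_mul_nonpos_right this (exp_pos _)
  linarith [hgA a (left_mem_Icc.2 hab)]

lemma abs_eq_of_hasDerivAt_neg_mul_add {g h k : ℝ → ℝ} {a b A K : ℝ} (hab : a ≤ b)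
    (hg : ContinuousOn g (Icc a b))
    (hg' : ∀ τ ∈ Ioo a b, HasDerivAt g (-(k τ * (g τ + h τ))) τ)
    (hk : ∀ τ ∈ Ioo a b, 0 ≤ k τ ∧ k τ ≤ K)
    (hgA : ∀ τ ∈ Icc a b, |g τ| ≤ A) (hhA : ∀ τ ∈ Ioo a b, |h τ| ≤ A) (hb : |g b| = A) :
    |g a| = A := by
  have hA : 0 ≤ A := hb ▸ abs_nonneg (g b)
  rcases abs_choice (g b) with hgb | hgb
  · rw [eq_of_hasDerivAt_neg_mul_add hab hg hg' hk (fun τ hτ => (abs_le.1 (hgA τ hτ)).2)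
      (fun τ hτ => (abs_le.1 (hhA τ hτ)).1) (hgb ▸ hb), abs_of_nonneg hA]
  · have := eq_of_hasDerivAt_neg_mul_add (g := fun τ => -g τ) (h := fun τ => -h τ) hab hg.neg
      (fun τ hτ => (hg' τ hτ).fun_neg.congr_deriv (by ring)) hk
      (fun τ hτ => neg_le.1 (abs_le.1 (hgA τ hτ)).1)
      (fun τ hτ => neg_le_neg (abs_le.1 (hhA τ hτ)).2)
      (by rw [← hgb, hb])
    rw [← abs_neg, this, abs_of_nonneg hA]

lemma exists_abs_charDeriv_d2_eq {p : ℝ} (hp : 2 < p) {u : ℝ × ℝ → ℝ} (hu : ContDiff ℝ 3 u)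
    (heq : ∀ x t : ℝ, 0 < t →
      d2 (d2 u) (x, t) - d1 (d1 u) (x, t) + |d2 u (x, t)| ^ (p - 1) * d2 u (x, t) = 0)
    {σ : ℝ} (hσ : σ * σ = 1) {a x₀ τ₀ A : ℝ} (ha : 0 ≤ a) (haτ : a ≤ τ₀)
    (hbound : ∀ x, ∀ τ ∈ Icc a τ₀,
      |charDeriv σ (d2 u) (x, τ)| ≤ A ∧ |charDeriv (-σ) (d2 u) (x, τ)| ≤ A)
    (hA : |charDeriv σ (d2 u) (x₀, τ₀)| = A) :
    ∃ x, |charDeriv σ (d2 u) (x, a)| = A := by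
  set c := x₀ + σ * τ₀
  have hv : ContDiff ℝ 2 (d2 u) := hu.d2 (by norm_num)
  have hY : ContDiff ℝ 1 (charDeriv σ (d2 u)) := hv.charDeriv (by norm_num) σ
  have hk : Continuous fun τ => p / 2 * |d2 u (c - σ * τ, τ)| ^ (p - 1) := by
    have : 0 ≤ p - 1 := by linarith
    fun_prop (disch := assumption)
  obtain ⟨K, hK⟩ := (isCompact_Icc (a := a) (b := τ₀)).bddAbove_image hk.continuousOn
  refine ⟨c - σ * a, abs_eq_of_hasDerivAt_neg_mul_add
    (g := fun τ => charDeriv σ (d2 u) (c - σ * τ, τ))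
    (h := fun τ => charDeriv (-σ) (d2 u) (c - σ * τ, τ)) haτ ?_ (fun τ hτ => ?_)
    (fun τ hτ => ⟨by positivity, hK ⟨τ, Ioo_subset_Icc_self hτ, rfl⟩⟩)
    (fun τ hτ => (hbound _ τ hτ).1) (fun τ hτ => (hbound _ τ (Ioo_subset_Icc_self hτ)).2)
    (by simpa [c] using hA)⟩
  · exact (hY.continuous.comp (by fun_prop)).continuousOn
  · refine (hasDerivAt_comp_characteristic (hY.differentiable one_ne_zero) σ c τ).congr_deriv ?_
    rw [charDeriv_neg_charDeriv hσ hv, d2_d2_d2_sub_d1_d1_d2 hp hu heq (by linarith [hτ.1]),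
      charDeriv_add_charDeriv_neg σ (d2 u)]
    ring

lemma Convex.eqOn_fderiv_apply_zero {E : Type*} [NormedAddCommGroup E] [NormedSpace ℝ E]
    {S : Set E} (hS : Convex ℝ S) (hS' : (interior S).Nonempty) {g : E → ℝ}
    (hg : Differentiable ℝ g) (h : EqOn g 0 S) (w : E) :
    EqOn (fun z => fderiv ℝ g z w) 0 S := by
  intro z hz
  dsimp only
  rw [← (hg z).fderivWithin (uniqueDiffOn_convex hS hS' z hz), fderivWithin_congr h (h hz)]
  simp

lemma Convex.eqOn_charDeriv_d2_zero {S : Set (ℝ × ℝ)} (hS : Convex ℝ S)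
    (hS' : (interior S).Nonempty) {u : ℝ × ℝ → ℝ} (hu : ContDiff ℝ 2 u) (h : EqOn u 0 S)
    (σ : ℝ) : EqOn (charDeriv σ (d2 u)) 0 S := by
  have hv : EqOn (d2 u) 0 S := hS.eqOn_fderiv_apply_zero hS' (hu.differentiable two_ne_zero) h _
  have hdv : Differentiable ℝ (d2 u) := (hu.d2 (m := 1) (by norm_num)).differentiable one_ne_zero
  intro z hz
  simp [charDeriv, d1, d2, hS.eqOn_fderiv_apply_zero hS' hdv hv _ hz]

lemma charDeriv_d2_eq_zero_of_le_abs {u : ℝ × ℝ → ℝ} (hu : ContDiff ℝ 2 u) {R T : ℝ}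
    (hT : 0 < T) (h : ∀ x t : ℝ, R ≤ |x| → 0 ≤ t → t ≤ T → u (x, t) = 0) (σ : ℝ)
    {x t : ℝ} (hx : R ≤ |x|) (ht : t ∈ Icc 0 T) : charDeriv σ (d2 u) (x, t) = 0 := by
  have key : ∀ I : Set ℝ, Convex ℝ I → (interior I).Nonempty → (∀ y ∈ I, R ≤ |y|) → x ∈ I →
      charDeriv σ (d2 u) (x, t) = 0 := fun I hI hI' hIR hxI =>
    (hI.prod (convex_Icc 0 T)).eqOn_charDeriv_d2_zero
      (by rw [interior_prod_eq, interior_Icc]; exact hI'.prod (nonempty_Ioo.2 hT)) hu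
      (fun z hz => h z.1 z.2 (hIR _ hz.1) hz.2.1 hz.2.2) σ ⟨hxI, ht⟩
  rcases le_abs'.1 hx with hx | hx
  · exact key (Iic (-R)) (convex_Iic _) (by simp) (fun y hy => le_abs'.2 (.inl hy)) hx
  · exact key (Ici R) (convex_Ici _) (by simp) (fun y hy => le_abs'.2 (.inr hy)) hx

lemma exists_isMaxOn_strip {F : ℝ × ℝ → ℝ} (hF : Continuous F) {R a b : ℝ} (hab : a ≤ b)
    (hF0 : ∀ x, ∀ τ ∈ Icc a b, R ≤ |x| → F (x, τ) = 0) :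
    ∃ z₀ ∈ univ ×ˢ Icc a b, IsMaxOn F (univ ×ˢ Icc a b) z₀ := by
  obtain ⟨z₀, hz₀, hmax⟩ := (isCompact_Icc.prod isCompact_Icc).exists_isMaxOn
    ((nonempty_Icc.2 (neg_le_self (abs_nonneg R))).prod (nonempty_Icc.2 hab)) hF.continuousOn
  have hF₀ : 0 ≤ F z₀ := by
    simpa [hF0 |R| a (left_mem_Icc.2 hab) (by simp [le_abs_self])] using
      isMaxOn_iff.1 hmax (|R|, a) ⟨right_mem_Icc.2 (neg_le_self (abs_nonneg R)), left_mem_Icc.2 hab⟩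
  refine ⟨z₀, ⟨mem_univ _, hz₀.2⟩, fun z hz => ?_⟩
  by_cases hzR : |z.1| ≤ |R|
  · exact isMaxOn_iff.1 hmax z ⟨abs_le.1 hzR, hz.2⟩
  · simpa [hF0 z.1 z.2 hz.2 ((le_abs_self R).trans (not_le.1 hzR).le)] using hF₀

theorem antitoneOn_max_iSup_abs_charDeriv_d2 {p : ℝ} (hp : 2 < p) {u : ℝ × ℝ → ℝ}
    (hu : ContDiff ℝ 3 u)
    (heq : ∀ x t : ℝ, 0 < t →
      d2 (d2 u) (x, t) - d1 (d1 u) (x, t) + |d2 u (x, t)| ^ (p - 1) * d2 u (x, t) = 0)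
    (hsupp : ∀ T : ℝ, 0 < T → ∃ R : ℝ, ∀ x t : ℝ, R ≤ |x| → 0 ≤ t → t ≤ T → u (x, t) = 0) :
    AntitoneOn (fun t => max (⨆ x, |charDeriv 1 (d2 u) (x, t)|)
      (⨆ x, |charDeriv (-1) (d2 u) (x, t)|)) (Ici 0) := by
  intro a ha b hb hab
  obtain ⟨R, hR⟩ := hsupp (b + 1) (by linarith [mem_Ici.1 hb])
  set Y : ℝ → ℝ × ℝ → ℝ := fun σ => charDeriv σ (d2 u)
  set F : ℝ × ℝ → ℝ := fun z => max |Y 1 z| |Y (-1) z|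
  have hY0 (σ x : ℝ) : ∀ τ ∈ Icc a b, R ≤ |x| → Y σ (x, τ) = 0 := fun τ hτ hx =>
    charDeriv_d2_eq_zero_of_le_abs (hu.of_le (by norm_num)) (by linarith [mem_Ici.1 hb]) hR σ hx
      ⟨(mem_Ici.1 ha).trans hτ.1, by linarith [hτ.2]⟩
  have hYc (σ : ℝ) : Continuous (Y σ) := ((hu.d2 (m := 2) (by norm_num)).charDeriv
    (m := 0) (by norm_num) σ).continuous
  obtain ⟨z₀, hz₀, hmax⟩ := exists_isMaxOn_strip (F := F) (R := R) (by fun_prop) hab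
    fun x τ hτ hx => by simp [F, hY0 _ x τ hτ hx]
  have hF (x : ℝ) {τ : ℝ} (hτ : τ ∈ Icc a b) : |Y 1 (x, τ)| ≤ F z₀ ∧ |Y (-1) (x, τ)| ≤ F z₀ :=
    max_le_iff.1 (isMaxOn_iff.1 hmax (x, τ) ⟨mem_univ x, hτ⟩)
  have hfoot {σ : ℝ} (hσ : σ * σ = 1) (hbound : ∀ x, ∀ τ ∈ Icc a z₀.2,
      |Y σ (x, τ)| ≤ F z₀ ∧ |Y (-σ) (x, τ)| ≤ F z₀) (hz : |Y σ z₀| = F z₀) :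
      F z₀ ≤ ⨆ x, |Y σ (x, a)| := by
    obtain ⟨x, hx⟩ := exists_abs_charDeriv_d2_eq hp hu heq hσ (mem_Ici.1 ha) hz₀.2.1 hbound hz
    exact hx.ge.trans
      (le_ciSup ⟨F z₀, forall_mem_range.2 fun x' => (hbound x' a ⟨le_rfl, hz₀.2.1⟩).1⟩ x)
  have hsub : Icc a z₀.2 ⊆ Icc a b := Icc_subset_Icc_right hz₀.2.2
  calc max (⨆ x, |Y 1 (x, b)|) (⨆ x, |Y (-1) (x, b)|)
      ≤ F z₀ := max_le (ciSup_le fun x => (hF x ⟨hab, le_rfl⟩).1)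
        (ciSup_le fun x => (hF x ⟨hab, le_rfl⟩).2)
    _ ≤ max (⨆ x, |Y 1 (x, a)|) (⨆ x, |Y (-1) (x, a)|) := by
      rcases max_choice |Y 1 z₀| |Y (-1) z₀| with h | h
      · exact (hfoot (by norm_num) (fun x τ hτ => hF x (hsub hτ)) h.symm).trans (le_max_left _ _)
      · refine (hfoot (by norm_num) (fun x τ hτ => ?_) h.symm).trans (le_max_right _ _)
        simpa only [neg_neg] using (hF x (hsub hτ)).symm

/-- for the 1D dissipative wave equation, the quantity
`max(sup_x |Y₊(x,t)|, sup_x |Y₋(x,t)|)` with `Y± = (∂ₜ ± ∂ₓ)∂ₜu` is nonincreasing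
in `t` on `[0,∞)`. -/
theorem haraux_sup_nonincreasing_1d
    (p : ℝ) (hp : 3 ≤ p)
    (u : ℝ × ℝ → ℝ) (hu : ContDiff ℝ 3 u)
    (heq : ∀ x t : ℝ, 0 ≤ t →
      d2 (d2 u) (x, t) - d1 (d1 u) (x, t) + |d2 u (x, t)| ^ (p - 1) * d2 u (x, t) = 0)
    (hsupp : ∀ T : ℝ, 0 < T → ∃ R > (0 : ℝ), ∀ x t : ℝ,
      R ≤ |x| → 0 ≤ t → t ≤ T → u (x, t) = 0) :
    AntitoneOn (fun t : ℝ =>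
      max (⨆ x : ℝ, |d2 (d2 u) (x, t) + d1 (d2 u) (x, t)|)
          (⨆ x : ℝ, |d2 (d2 u) (x, t) - d1 (d2 u) (x, t)|)) (Set.Ici 0) := by
  simpa [charDeriv, ← sub_eq_add_neg] using antitoneOn_max_iSup_abs_charDeriv_d2 (by linarith) hu
    (fun x t ht => heq x t ht.le) fun T hT => (hsupp T hT).imp fun _ hR => hR.2
end
end
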